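/- Let r_1, r_2 ∈ [n] be distinct. For any σ_1 ∈ SC^{(r_1)} and σ_2 ∈ SC^{(r_2)}, the composition σ_1 ∘ σ_2 cannot be a permutation of {0,1}^n whose cycle decomposition consists of exactly one 3-cycle (all other points fixed), nor one whose cycle decomposition consists of exactly one 5-cycle (all other points fixed). -/

import Mathlib

/-!
Write `c = σ₁σ₂`, `S` for its support, `r = r₁` and `s = r₂`. Two local rules hold: if `c` fixes
`x^{⊕s}` then `c` preserves the `r`-th bit of `x`; and if `x ∈ S` while `c` fixes `x^{⊕r}` and
`x^{⊕s}`, then `x^{⊕r⊕s} ∈ S`. When `c` is a cycle of length at least 3, following the `r`-th bit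
around the cycle with these rules shows that at least three, hence (the set being closed under
`⊕s`) at least four points of `S` have their `s`-neighbour in `S`; passing to
`c⁻¹ = σ₂⁻¹σ₁⁻¹`, the same holds for `r`. This excludes `|S| = 3`. For `|S| = 5` exactly one
point `v ∈ S` has `v^{⊕r} ∉ S` and exactly one has its `s`-neighbour outside `S`; the second
rule forces `v^{⊕s}, v^{⊕r⊕s} ∈ S`, and the two remaining points of `S` form a set closed under
both flips, whose size would have to be divisible by 4.
-/

open Equiv

/-- `x` with its `i`-th bit flipped. -/
def flipBit {n : ℕ} (i : Fin n) (x : Fin n → Bool) : Fin n → Bool :=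
  Function.update x i (!x i)

/-- `SC i`: the set of `i`-concurrent controlled permutations (`i`-CCRBFs) of
the hypercube `{0,1}^n`: the `i`-th bit of every point is preserved, and the
action on all other bits does not depend on the `i`-th bit. -/
def SC {n : ℕ} (i : Fin n) : Set (Perm (Fin n → Bool)) :=
  {σ | (∀ x, σ x i = x i) ∧ ∀ x, ∀ k, k ≠ i → σ x k = σ (flipBit i x) k}

/-- `AC i`: the set of concurrently even `i`-CCRBFs: those `σ ∈ SC i` whose
induced permutation of the face `{x | x i = false}` is even. -/
def AC {n : ℕ} (i : Fin n) : Set (Perm (Fin n → Bool)) :=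
  {σ | σ ∈ SC i ∧ ∃ h : ∀ x : Fin n → Bool, x i = false ↔ σ x i = false,
    Perm.sign (σ.subtypePerm (p := fun x : Fin n → Bool => x i = false) fun x => (h x).symm) = 1}

section Hypercube

open Finset

variable {n : ℕ} {i j : Fin n}

lemma Finset.eq_of_card_le_card_filter_add_one {α : Type*} {s : Finset α} {p : α → Prop}
    [DecidablePred p] (h : #s ≤ #(s.filter p) + 1) ⦃x y : α⦄ (hx : x ∈ s) (hy : y ∈ s)
    (hpx : ¬p x) (hpy : ¬p y) : x = y := by
  have h1 : #(s.filter fun a => ¬p a) ≤ 1 := by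
    have := card_filter_add_card_filter_not (s := s) p
    omega
  exact card_le_one.1 h1 x (mem_filter.2 ⟨hx, hpx⟩) y (mem_filter.2 ⟨hy, hpy⟩)

lemma Equiv.Perm.exists_mem_eq_of_pow_apply_mem {α β : Type*} {c : Perm α} {Q : Set α}
    {g : α → β} (hg : ∀ x ∉ Q, g (c x) = g x) {y : α} {m : ℕ} (hm : (c ^ m) y ∈ Q) :
    ∃ z ∈ Q, g z = g y := by
  induction m generalizing y with
  | zero => exact ⟨y, hm, rfl⟩
  | succ m ih =>
    by_cases hy : y ∈ Q
    · exact ⟨y, hy, rfl⟩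
    · obtain ⟨z, hz, hgz⟩ := ih (y := c y) (by rwa [← Perm.mul_apply, ← pow_succ])
      exact ⟨z, hz, hgz.trans (hg y hy)⟩

lemma Equiv.Perm.IsCycle.eq_of_mem_support_of_invariant {α β : Type*} [Fintype α]
    [DecidableEq α] {c : Perm α} (hc : c.IsCycle) {g : α → β} (hg : ∀ x, g (c x) = g x) {x y : α}
    (hx : x ∈ c.support) (hy : y ∈ c.support) : g y = g x := by
  obtain ⟨m, hm⟩ := hc.exists_pow_eq (Perm.mem_support.1 hx) (Perm.mem_support.1 hy)
  obtain ⟨z, rfl, hz⟩ := Perm.exists_mem_eq_of_pow_apply_mem (Q := {y}) (fun x _ => hg x) hm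
  exact hz

@[simp]
lemma flipBit_apply_self (i : Fin n) (x : Fin n → Bool) : flipBit i x i = !x i := by
  simp [flipBit]

@[simp]
lemma flipBit_apply_of_ne {k : Fin n} (h : k ≠ i) (x : Fin n → Bool) : flipBit i x k = x k :=
  Function.update_of_ne h _ _

lemma flipBit_involutive (i : Fin n) : Function.Involutive (flipBit i) := fun x => by
  funext k
  by_cases h : k = i
  · subst h; simp
  · simp [h]

@[simp]
lemma flipBit_flipBit (i : Fin n) (x : Fin n → Bool) : flipBit i (flipBit i x) = x :=
  flipBit_involutive i x

lemma flipBit_comm (i j : Fin n) (x : Fin n → Bool) :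
    flipBit i (flipBit j x) = flipBit j (flipBit i x) := by
  funext k
  by_cases hi : k = i <;> by_cases hj : k = j <;> simp_all

lemma flipBit_ne_self (i : Fin n) (x : Fin n → Bool) : flipBit i x ≠ x := fun h => by
  simpa using congrFun h i

lemma flipBit_ne_flipBit (h : i ≠ j) (x : Fin n → Bool) : flipBit i x ≠ flipBit j x :=
  fun h' => by simpa [h] using congrFun h' i

lemma flipBit_flipBit_ne_self (h : i ≠ j) (x : Fin n → Bool) :
    flipBit i (flipBit j x) ≠ x :=
  fun h' => flipBit_ne_flipBit h.symm x ((flipBit_involutive i).eq_iff.1 h')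

lemma card_eq_two_mul_card_filter_of_flipBit_mem {S : Finset (Fin n → Bool)}
    (h : ∀ x ∈ S, flipBit i x ∈ S) : #S = 2 * #(S.filter (· i = true)) := by
  have hswap : #(S.filter fun x => ¬x i = true) = #(S.filter (· i = true)) :=
    card_nbij' (flipBit i) (flipBit i) (fun x hx => by simp_all) (fun x hx => by simp_all)
      (fun x _ => flipBit_flipBit i x) (fun x _ => flipBit_flipBit i x)
  rw [← card_filter_add_card_filter_not (· i = true), hswap, two_mul]

lemma even_card_of_flipBit_mem {S : Finset (Fin n → Bool)} (h : ∀ x ∈ S, flipBit i x ∈ S) :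
    Even #S :=
  ⟨_, (card_eq_two_mul_card_filter_of_flipBit_mem h).trans (two_mul _)⟩

lemma four_dvd_card_of_flipBit_mem {S : Finset (Fin n → Bool)} (hij : i ≠ j)
    (hi : ∀ x ∈ S, flipBit i x ∈ S) (hj : ∀ x ∈ S, flipBit j x ∈ S) : 4 ∣ #S := by
  have hj' : ∀ x ∈ S.filter (· i = true), flipBit j x ∈ S.filter (· i = true) := fun x hx => by
    simp_all
  rw [card_eq_two_mul_card_filter_of_flipBit_mem hi, card_eq_two_mul_card_filter_of_flipBit_mem hj']
  exact ⟨_, by ring⟩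

lemma card_ne_five_of_four_le_card_filter_flipBit_mem {r s : Fin n} (hrs : r ≠ s)
    {S : Finset (Fin n → Bool)}
    (hS : ∀ x ∈ S, flipBit r x ∉ S → flipBit s x ∉ S → flipBit r (flipBit s x) ∈ S)
    (hr : 4 ≤ #(S.filter (flipBit r · ∈ S))) (hs : 4 ≤ #(S.filter (flipBit s · ∈ S))) :
    #S ≠ 5 := by
  intro h5
  have exit_r := eq_of_card_le_card_filter_add_one (s := S) (p := (flipBit r · ∈ S)) (by omega)
  have exit_s := eq_of_card_le_card_filter_add_one (s := S) (p := (flipBit s · ∈ S)) (by omega)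
  obtain ⟨v, hv, hvr⟩ : ∃ v ∈ S, flipBit r v ∉ S := by
    by_contra! h
    have := even_card_of_flipBit_mem h
    rw [h5] at this
    exact absurd this (by decide)
  have hwr : flipBit s (flipBit r (flipBit s v)) ∉ S := by rwa [flipBit_comm, flipBit_flipBit]
  have hvs : flipBit s v ∈ S := by
    by_contra hvs
    exact flipBit_flipBit_ne_self hrs v (exit_s (hS v hv hvr hvs) hv hwr hvs)
  have hvrs : flipBit r (flipBit s v) ∈ S := by
    by_contra h
    exact flipBit_ne_self s v (exit_r hvs hv h hvr)
  set V : Finset (Fin n → Bool) := {v, flipBit s v, flipBit r (flipBit s v)}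
  have hV : #V = 3 := card_eq_three.2 ⟨_, _, _, (flipBit_ne_self s v).symm,
    (flipBit_flipBit_ne_self hrs v).symm, (flipBit_ne_self r _).symm, rfl⟩
  set T := S \ V
  have hT : #T = 2 := by
    rw [card_sdiff_of_subset (by simp [V, insert_subset_iff, hv, hvs, hvrs]), hV, h5]
  have hTr : ∀ x ∈ T, flipBit r x ∈ T := by
    intro x hx
    simp only [T, V, mem_sdiff, mem_insert, mem_singleton] at hx ⊢
    refine ⟨by_contra fun h => hx.2 (Or.inl (exit_r hx.1 hv h hvr)), ?_⟩
    simp only [(flipBit_involutive r).eq_iff, flipBit_flipBit]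
    rintro (rfl | rfl | rfl) <;> simp_all
  have hTs : ∀ x ∈ T, flipBit s x ∈ T := by
    intro x hx
    simp only [T, V, mem_sdiff, mem_insert, mem_singleton] at hx ⊢
    refine ⟨by_contra fun h => hx.2 (Or.inr (Or.inr (exit_s hx.1 hvrs h hwr))), ?_⟩
    simp only [(flipBit_involutive s).eq_iff, flipBit_flipBit]
    rintro (rfl | rfl | rfl) <;> simp_all [flipBit_comm s r]
  have := four_dvd_card_of_flipBit_mem hrs hTr hTs
  omega

namespace SC

variable {r s : Fin n} {σ τ : Perm (Fin n → Bool)}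

lemma apply_self (hσ : σ ∈ SC i) (x : Fin n → Bool) : σ x i = x i :=
  hσ.1 x

lemma apply_flipBit (hσ : σ ∈ SC i) (x : Fin n → Bool) : σ (flipBit i x) = flipBit i (σ x) := by
  funext k
  by_cases hk : k = i
  · subst hk; simp [apply_self hσ]
  · rw [flipBit_apply_of_ne hk, ← hσ.2 x k hk]

lemma inv_mem (hσ : σ ∈ SC i) : σ⁻¹ ∈ SC i := by
  have hflip (x : Fin n → Bool) : σ⁻¹ (flipBit i x) = flipBit i (σ⁻¹ x) :=
    σ.injective (by simp [apply_flipBit hσ])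
  refine ⟨fun x => ?_, fun x k hk => by rw [hflip, flipBit_apply_of_ne hk]⟩
  simpa using (apply_self hσ (σ⁻¹ x)).symm

lemma mul_apply_self_of_flipBit_notMem_support (hrs : r ≠ s) (hσ : σ ∈ SC r) (hτ : τ ∈ SC s)
    {x : Fin n → Bool} (hx : flipBit s x ∉ (σ * τ).support) : (σ * τ) x r = x r := by
  rw [Perm.notMem_support, Perm.mul_apply, apply_flipBit hτ] at hx
  have hr := congrFun hx r
  rw [apply_self hσ, flipBit_apply_of_ne hrs, flipBit_apply_of_ne hrs] at hr
  rw [Perm.mul_apply, apply_self hσ, hr]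

lemma flipBit_flipBit_mem_support_mul (hσ : σ ∈ SC r) (hτ : τ ∈ SC s)
    {x : Fin n → Bool} (hx : x ∈ (σ * τ).support) (hxr : flipBit r x ∉ (σ * τ).support)
    (hxs : flipBit s x ∉ (σ * τ).support) : flipBit r (flipBit s x) ∈ (σ * τ).support := by
  rw [Perm.mem_support, Perm.mul_apply] at hx ⊢
  rw [Perm.notMem_support, Perm.mul_apply] at hxr hxs
  intro hxrs
  rw [apply_flipBit hτ] at hxs
  rw [flipBit_comm, apply_flipBit hτ] at hxrs
  have hxrs' : σ (flipBit r (flipBit s (τ (flipBit r x)))) = flipBit s x := by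
    rw [apply_flipBit hσ, hxrs, flipBit_comm, flipBit_flipBit]
  have hτr : τ (flipBit r x) = flipBit r (τ x) := by
    have h := σ.injective (hxrs'.trans hxs.symm)
    rw [flipBit_comm, (flipBit_involutive s).injective.eq_iff] at h
    rw [← h, flipBit_flipBit]
  rw [hτr, apply_flipBit hσ] at hxr
  exact hx ((flipBit_involutive r).injective hxr)

lemma mul_apply_self_of_card_filter_flipBit_mem_support_le_two (hrs : r ≠ s) (hσ : σ ∈ SC r)
    (hτ : τ ∈ SC s) (hc : (σ * τ).IsCycle)
    (h2 : #((σ * τ).support.filter (flipBit s · ∈ (σ * τ).support)) ≤ 2) (p : Fin n → Bool) :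
    (σ * τ) p r = p r := by
  set c := σ * τ
  set S := c.support
  -- If the `r`-th bit changes at `p`, then `flipBit s p ∈ S`, and the bit cannot change again on
  -- the way from `c p` round to `p` or `flipBit s p`, which both carry the bit of `p`.
  by_contra hp
  have hpS : p ∈ S := Perm.mem_support.2 fun h => hp (by rw [h])
  have hps : flipBit s p ∈ S := by
    by_contra h
    exact hp (mul_apply_self_of_flipBit_notMem_support hrs hσ hτ h)
  have hpair : S.filter (flipBit s · ∈ S) = {p, flipBit s p} := by
    refine (eq_of_subset_of_card_le ?_ ?_).symm
    · intro x hx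
      simp only [mem_insert, mem_singleton] at hx
      rcases hx with rfl | rfl <;> simp [hpS, hps]
    · rwa [card_pair (flipBit_ne_self s p).symm]
  have hstep : ∀ x ∉ ({p, flipBit s p} : Set _), c x r = x r := by
    intro x hx
    by_cases hxS : x ∈ S
    · refine mul_apply_self_of_flipBit_notMem_support hrs hσ hτ fun h => hx ?_
      have hxP : x ∈ S.filter (flipBit s · ∈ S) := mem_filter.2 ⟨hxS, h⟩
      simpa [hpair] using hxP
    · rw [Perm.notMem_support.1 hxS]
  obtain ⟨m, hm⟩ := hc.exists_pow_eq (Perm.mem_support.1 (Perm.apply_mem_support.2 hpS))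
    (Perm.mem_support.1 hpS)
  obtain ⟨z, hz, hzr⟩ := Perm.exists_mem_eq_of_pow_apply_mem (g := (· r)) hstep
    (y := c p) (by rw [hm]; exact Set.mem_insert p _)
  rcases hz with rfl | rfl
  · exact hp hzr.symm
  · rw [flipBit_apply_of_ne hrs] at hzr
    exact hp hzr.symm

lemma three_le_card_filter_flipBit_mem_support (hrs : r ≠ s) (hσ : σ ∈ SC r) (hτ : τ ∈ SC s)
    (hc : (σ * τ).IsCycle) (h3 : 3 ≤ #(σ * τ).support) :
    3 ≤ #((σ * τ).support.filter (flipBit s · ∈ (σ * τ).support)) := by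
  set S := (σ * τ).support
  by_contra! hlt
  have hconst := mul_apply_self_of_card_filter_flipBit_mem_support_le_two hrs hσ hτ hc
    (Nat.le_of_lt_succ hlt)
  have hS {x y} (hx : x ∈ S) (hy : y ∈ S) : y r = x r :=
    hc.eq_of_mem_support_of_invariant (g := (· r)) hconst hx hy
  obtain ⟨x, hx, hxP⟩ := exists_mem_notMem_of_card_lt_card (hlt.trans_le h3)
  have hxs : flipBit s x ∉ S := fun h => hxP (mem_filter.2 ⟨hx, h⟩)
  by_cases hxr : flipBit r x ∈ S
  · simpa using hS hx hxr
  · simpa [flipBit_apply_of_ne hrs] using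
      hS hx (flipBit_flipBit_mem_support_mul hσ hτ hx hxr hxs)

lemma four_le_card_filter_flipBit_mem_support (hrs : r ≠ s) (hσ : σ ∈ SC r) (hτ : τ ∈ SC s)
    (hc : (σ * τ).IsCycle) (h3 : 3 ≤ #(σ * τ).support) :
    4 ≤ #((σ * τ).support.filter (flipBit s · ∈ (σ * τ).support)) := by
  have hP := three_le_card_filter_flipBit_mem_support hrs hσ hτ hc h3
  obtain ⟨m, hm⟩ := even_card_of_flipBit_mem (i := s)
      (S := (σ * τ).support.filter (flipBit s · ∈ (σ * τ).support)) fun x hx => by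
    rw [mem_filter] at hx ⊢
    exact ⟨hx.2, by rw [flipBit_flipBit]; exact hx.1⟩
  omega

lemma card_support_mul_ne_three_and_ne_five (hrs : r ≠ s) (hσ : σ ∈ SC r) (hτ : τ ∈ SC s)
    (hc : (σ * τ).IsCycle) : #(σ * τ).support ≠ 3 ∧ #(σ * τ).support ≠ 5 := by
  have hs := four_le_card_filter_flipBit_mem_support hrs hσ hτ hc
  have hr := four_le_card_filter_flipBit_mem_support hrs.symm (inv_mem hτ) (inv_mem hσ)
  simp only [← mul_inv_rev, Perm.support_inv, Perm.isCycle_inv] at hr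
  refine ⟨fun h3 => ?_, fun h5 => ?_⟩
  · have := (hs (by omega)).trans (card_filter_le _ _)
    omega
  · exact card_ne_five_of_four_le_card_filter_flipBit_mem hrs
      (fun x => flipBit_flipBit_mem_support_mul hσ hτ) (hr hc (by omega)) (hs (by omega)) h5

end SC

end Hypercube

/-- The product of two concurrent controlled permutations in distinct
dimensions is never a single 3-cycle nor a single 5-cycle. -/
theorem no_single_35_cycle (n : ℕ) (r1 r2 : Fin n) (hr : r1 ≠ r2)
    (σ1 : Perm (Fin n → Bool)) (hσ1 : σ1 ∈ SC r1)
    (σ2 : Perm (Fin n → Bool)) (hσ2 : σ2 ∈ SC r2) :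
    (σ1 * σ2).cycleType ≠ {3} ∧ (σ1 * σ2).cycleType ≠ {5} := by
  have hcycle {k : ℕ} (hk : (σ1 * σ2).cycleType = {k}) :
      (σ1 * σ2).IsCycle ∧ (σ1 * σ2).support.card = k :=
    ⟨by rw [← Perm.card_cycleType_eq_one, hk, Multiset.card_singleton],
      by rw [← Perm.sum_cycleType, hk, Multiset.sum_singleton]⟩
  refine ⟨fun h3 => ?_, fun h5 => ?_⟩
  · obtain ⟨hc, hcard⟩ := hcycle h3
    exact (SC.card_support_mul_ne_three_and_ne_five hr hσ1 hσ2 hc).1 hcard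
  · obtain ⟨hc, hcard⟩ := hcycle h5
    exact (SC.card_support_mul_ne_three_and_ne_five hr hσ1 hσ2 hc).2 hcard
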